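/- Under the assumptions of the previous statement, additionally suppose the denominator count $N_T = \sum_{t=1}^T \mathbb{1}(X_t \in \mathcal{S}) D_t$ satisfies $\mathbb{E}[\mathbb{1}(X_t \in \mathcal{S}) D_t \mid \mathcal{F}_{t-1}] \ge \delta^2$ for all $t$. Then $N_T / T \ge \delta^2/2$ with probability approaching 1, and the ratio estimator $\hat{\mu}_T = \frac{\sum_{t=1}^T \mathbb{1}(X_t \in \mathcal{S}) D_t Y_t}{\sum_{t=1}^T \mathbb{1}(X_t \in \mathcal{S}) D_t}$ converges in probability to $\mathbb{E}[Y(1) \mid X \in \mathcal{S}]$ as $T \to \infty$. -/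

import Mathlib

open MeasureTheory ProbabilityTheory Filter


section helpers

variable {Ω : Type*} {m0 : MeasurableSpace Ω} {μ : Measure Ω}

lemma memL2_integrable_mul {f g : Ω → ℝ} (hf : MemLp f 2 μ) (hg : MemLp g 2 μ) :
    Integrable (fun ω => f ω * g ω) μ := by
  have hint : Integrable (fun ω => (f ω ^ 2 + g ω ^ 2) / 2) μ :=
    (hf.integrable_sq.add hg.integrable_sq).div_const 2
  refine hint.mono' (hf.1.mul hg.1) ?_
  filter_upwards with ω
  rw [Real.norm_eq_abs, abs_mul]
  nlinarith [sq_abs (f ω), sq_abs (g ω), sq_nonneg (|f ω| - |g ω|), abs_nonneg (f ω),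
    abs_nonneg (g ω)]

lemma cheb_bound [IsProbabilityMeasure μ]
    (𝓕 : Filtration ℕ m0) (g : ℕ → Ω → ℝ) (C : ℝ)
    (hadapt : ∀ t, 1 ≤ t → StronglyMeasurable[𝓕 t] (g t))
    (hL2 : ∀ t, 1 ≤ t → MemLp (g t) 2 μ)
    (hvar : ∀ t, 1 ≤ t → ∫ ω, (g t ω) ^ 2 ∂μ ≤ C)
    (hcond : ∀ t, 1 ≤ t → μ[g t | 𝓕 (t - 1)] =ᵐ[μ] 0)
    {ε : ℝ} (hε : 0 < ε) {T : ℕ} (hT : 1 ≤ T) :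
    (μ {ω | ε ≤ |∑ t ∈ Finset.Icc 1 T, g t ω| / T}).toReal ≤ C / ε ^ 2 / T := by
  have hT0 : (0:ℝ) < T := by exact_mod_cast hT
  have hmem : ∀ t ∈ Finset.Icc 1 T, MemLp (g t) 2 μ :=
    fun t ht => hL2 t (Finset.mem_Icc.mp ht).1
  have hSL2 : MemLp (fun ω => ∑ t ∈ Finset.Icc 1 T, g t ω) 2 μ :=
    memLp_finset_sum (Finset.Icc 1 T) hmem
  have hSsq : Integrable (fun ω => (∑ t ∈ Finset.Icc 1 T, g t ω) ^ 2) μ := hSL2.integrable_sq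
  have ortho : ∀ s ∈ Finset.Icc 1 T, ∀ t ∈ Finset.Icc 1 T, s ≠ t →
      ∫ ω, g s ω * g t ω ∂μ = 0 := by
    have key : ∀ s t, 1 ≤ s → s < t → ∫ ω, g s ω * g t ω ∂μ = 0 := by
      intro s t hs hst
      have ht : 1 ≤ t := hs.trans hst.le
      have hint : Integrable (fun ω => g s ω * g t ω) μ :=
        memL2_integrable_mul (hL2 s hs) (hL2 t ht)
      have hgt : Integrable (g t) μ := (hL2 t ht).integrable one_le_two
      have hsm : StronglyMeasurable[𝓕 (t-1)] (g s) :=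
        (hadapt s hs).mono (𝓕.mono (by omega))
      have h1 : μ[g s * g t | 𝓕 (t-1)] =ᵐ[μ] g s * μ[g t | 𝓕 (t-1)] :=
        condExp_mul_of_stronglyMeasurable_left hsm hint hgt
      have h2 : μ[g s * g t | 𝓕 (t-1)] =ᵐ[μ] fun _ => (0:ℝ) := by
        filter_upwards [h1, hcond t ht] with ω h1ω h2ω
        rw [h1ω, Pi.mul_apply, h2ω, Pi.zero_apply, mul_zero]
      calc ∫ ω, g s ω * g t ω ∂μ
          = ∫ ω, (μ[g s * g t | 𝓕 (t-1)]) ω ∂μ := (integral_condExp (𝓕.le (t-1))).symm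
        _ = 0 := by rw [integral_congr_ae h2]; simp
    intro s hs t ht hst
    rcases lt_or_gt_of_ne hst with h | h
    · exact key s t (Finset.mem_Icc.mp hs).1 h
    · rw [integral_congr_ae (Eventually.of_forall fun ω => mul_comm (g s ω) (g t ω))]
      exact key t s (Finset.mem_Icc.mp ht).1 h
  have hmoment : ∫ ω, (∑ t ∈ Finset.Icc 1 T, g t ω) ^ 2 ∂μ ≤ C * T := by
    have expand : ∀ ω, (∑ t ∈ Finset.Icc 1 T, g t ω) ^ 2
        = ∑ s ∈ Finset.Icc 1 T, ∑ t ∈ Finset.Icc 1 T, g s ω * g t ω := by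
      intro ω; rw [sq, Finset.sum_mul_sum]
    calc ∫ ω, (∑ t ∈ Finset.Icc 1 T, g t ω) ^ 2 ∂μ
        = ∑ s ∈ Finset.Icc 1 T, ∑ t ∈ Finset.Icc 1 T, ∫ ω, g s ω * g t ω ∂μ := by
          rw [integral_congr_ae (Eventually.of_forall expand),
            integral_finset_sum _ (fun s hs => integrable_finset_sum _ (fun t ht =>
              memL2_integrable_mul (hmem s hs) (hmem t ht)))]
          exact Finset.sum_congr rfl fun s hs =>
            integral_finset_sum _ fun t ht => memL2_integrable_mul (hmem s hs) (hmem t ht)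
      _ = ∑ t ∈ Finset.Icc 1 T, ∫ ω, g t ω * g t ω ∂μ :=
          Finset.sum_congr rfl fun s hs =>
            Finset.sum_eq_single_of_mem s hs fun t ht hts => ortho s hs t ht (Ne.symm hts)
      _ ≤ ∑ t ∈ Finset.Icc 1 T, C := by
          refine Finset.sum_le_sum fun t ht => ?_
          have := hvar t (Finset.mem_Icc.mp ht).1
          calc ∫ ω, g t ω * g t ω ∂μ = ∫ ω, (g t ω) ^ 2 ∂μ := by
                exact integral_congr_ae (Eventually.of_forall fun ω => (sq (g t ω)).symm)
            _ ≤ C := this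
      _ = C * T := by
          rw [Finset.sum_const, Nat.card_Icc]
          simp [mul_comm]
  have hkey := mul_meas_ge_le_integral_of_nonneg
    (Eventually.of_forall fun ω => sq_nonneg (∑ t ∈ Finset.Icc 1 T, g t ω)) hSsq ((ε * T) ^ 2)
  have hsub : {ω | ε ≤ |∑ t ∈ Finset.Icc 1 T, g t ω| / T}
      ⊆ {ω | (ε * T) ^ 2 ≤ (∑ t ∈ Finset.Icc 1 T, g t ω) ^ 2} := by
    intro ω hω
    simp only [Set.mem_setOf_eq] at hω ⊢
    rw [le_div_iff₀ hT0] at hω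
    calc (ε*T)^2 ≤ |∑ t ∈ Finset.Icc 1 T, g t ω| ^ 2 := by
          apply pow_le_pow_left₀ (by positivity) hω
      _ = _ := sq_abs _
  have hmono : (μ {ω | ε ≤ |∑ t ∈ Finset.Icc 1 T, g t ω| / T}).toReal
      ≤ (μ {ω | (ε * T) ^ 2 ≤ (∑ t ∈ Finset.Icc 1 T, g t ω) ^ 2}).toReal :=
    ENNReal.toReal_mono (measure_ne_top μ _) (measure_mono hsub)
  have hpos : (0:ℝ) < (ε * T) ^ 2 := by positivity
  have hbound : (μ {ω | (ε * T) ^ 2 ≤ (∑ t ∈ Finset.Icc 1 T, g t ω) ^ 2}).toReal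
      ≤ (C * T) / (ε * T) ^ 2 := by
    rw [le_div_iff₀ hpos]
    simp only [Measure.real] at hkey
    nlinarith [hkey, hmoment]
  refine hmono.trans (hbound.trans (le_of_eq ?_))
  rw [div_div]
  rw [mul_pow]
  field_simp

lemma ratio_consistency [IsProbabilityMeasure μ] (𝓕 : Filtration ℕ m0)
    (Z W : ℕ → Ω → ℝ) (mS δ CW : ℝ) (hδ0 : 0 < δ)
    (hZ01 : ∀ t ω, Z t ω = 0 ∨ Z t ω = 1)
    (hZadapt : ∀ t, 1 ≤ t → StronglyMeasurable[𝓕 t] (Z t))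
    (hWadapt : ∀ t, 1 ≤ t → StronglyMeasurable[𝓕 t] (W t))
    (hWL2 : ∀ t, 1 ≤ t → MemLp (W t) 2 μ)
    (hWvar : ∀ t, 1 ≤ t → ∫ ω, (W t ω) ^ 2 ∂μ ≤ CW)
    (hWcond : ∀ t, 1 ≤ t →
      μ[W t | 𝓕 (t-1)] =ᵐ[μ] fun ω => mS * (μ[Z t | 𝓕 (t-1)]) ω)
    (hZlb : ∀ t, 1 ≤ t → ∀ᵐ ω ∂μ, δ ^ 2 ≤ (μ[Z t | 𝓕 (t-1)]) ω) :
    Tendsto (fun T : ℕ =>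
      (μ {ω | (∑ t ∈ Finset.Icc 1 T, Z t ω) / T < δ ^ 2 / 2}).toReal)
      atTop (nhds 0) ∧
    ∀ ε : ℝ, 0 < ε →
      Tendsto (fun T : ℕ =>
        (μ {ω | ε ≤ |(∑ t ∈ Finset.Icc 1 T, W t ω) /
          (∑ t ∈ Finset.Icc 1 T, Z t ω) - mS|}).toReal)
        atTop (nhds 0) := by
  have hZabs : ∀ t ω, |Z t ω| ≤ 1 := by
    intro t ω; rcases hZ01 t ω with h | h <;> rw [h] <;> norm_num
  have hZsm : ∀ t, 1 ≤ t → StronglyMeasurable (Z t) :=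
    fun t ht => (hZadapt t ht).mono (𝓕.le t)
  have hWsm : ∀ t, 1 ≤ t → StronglyMeasurable (W t) :=
    fun t ht => (hWadapt t ht).mono (𝓕.le t)
  have hZL2 : ∀ t, 1 ≤ t → MemLp (Z t) 2 μ := fun t ht =>
    MemLp.of_bound (hZsm t ht).aestronglyMeasurable 1
      (Eventually.of_forall fun ω => by rw [Real.norm_eq_abs]; exact hZabs t ω)
  have hZint : ∀ t, 1 ≤ t → Integrable (Z t) μ := fun t ht => (hZL2 t ht).integrable one_le_two
  have hWint : ∀ t, 1 ≤ t → Integrable (W t) μ := fun t ht => (hWL2 t ht).integrable one_le_two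
  have hAbdd : ∀ t, 1 ≤ t → ∀ᵐ ω ∂μ, |(μ[Z t | 𝓕 (t-1)]) ω| ≤ 1 := by
    intro t ht
    have := ae_bdd_condExp_of_ae_bdd (m := 𝓕 (t-1)) (μ := μ) (R := 1) (f := Z t)
      (Eventually.of_forall fun ω => by simpa using hZabs t ω)
    simpa using this
  -- the martingale difference sequences
  set g1 : ℕ → Ω → ℝ := fun t => Z t - μ[Z t | 𝓕 (t-1)] with hg1
  set g2 : ℕ → Ω → ℝ := fun t => W t - mS • Z t with hg2
  have hg1adapt : ∀ t, 1 ≤ t → StronglyMeasurable[𝓕 t] (g1 t) := fun t ht =>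
    (hZadapt t ht).sub (stronglyMeasurable_condExp.mono (𝓕.mono (Nat.sub_le t 1)))
  have hg1L2 : ∀ t, 1 ≤ t → MemLp (g1 t) 2 μ := fun t ht =>
    MemLp.of_bound ((hg1adapt t ht).mono (𝓕.le t)).aestronglyMeasurable 2
      (by filter_upwards [hAbdd t ht] with ω hω
          have := hZabs t ω
          simp only [hg1, Pi.sub_apply, Real.norm_eq_abs]
          have := abs_sub (Z t ω) ((μ[Z t | 𝓕 (t-1)]) ω)
          calc |Z t ω - (μ[Z t | 𝓕 (t-1)]) ω| ≤ |Z t ω| + |(μ[Z t | 𝓕 (t-1)]) ω| :=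
                abs_sub _ _
            _ ≤ 2 := by linarith [hZabs t ω])
  have hg1var : ∀ t, 1 ≤ t → ∫ ω, (g1 t ω) ^ 2 ∂μ ≤ 4 := by
    intro t ht
    have hint : Integrable (fun ω => (g1 t ω) ^ 2) μ := (hg1L2 t ht).integrable_sq
    calc ∫ ω, (g1 t ω) ^ 2 ∂μ ≤ ∫ _, (4:ℝ) ∂μ := by
          refine integral_mono_ae hint (integrable_const 4) ?_
          filter_upwards [hAbdd t ht] with ω hω
          have h1 := hZabs t ω
          simp only [hg1, Pi.sub_apply]
          nlinarith [abs_nonneg (Z t ω), abs_nonneg ((μ[Z t | 𝓕 (t-1)]) ω),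
            sq_abs (Z t ω), sq_abs ((μ[Z t | 𝓕 (t-1)]) ω),
            abs_mul_abs_self (Z t ω), neg_abs_le (Z t ω),
            le_abs_self (Z t ω), neg_abs_le ((μ[Z t | 𝓕 (t-1)]) ω),
            le_abs_self ((μ[Z t | 𝓕 (t-1)]) ω)]
      _ = 4 := by simp
  have hg1cond : ∀ t, 1 ≤ t → μ[g1 t | 𝓕 (t-1)] =ᵐ[μ] 0 := by
    intro t ht
    have h := condExp_sub (m := 𝓕 (t-1)) (hZint t ht)
      (integrable_condExp (f := Z t) (m := 𝓕 (t-1)))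
    rw [condExp_of_stronglyMeasurable (𝓕.le (t-1)) stronglyMeasurable_condExp
      (integrable_condExp (f := Z t) (m := 𝓕 (t-1)))] at h
    refine h.trans ?_
    filter_upwards with ω
    simp
  have hg2adapt : ∀ t, 1 ≤ t → StronglyMeasurable[𝓕 t] (g2 t) := fun t ht =>
    (hWadapt t ht).sub ((hZadapt t ht).const_smul mS)
  have hg2L2 : ∀ t, 1 ≤ t → MemLp (g2 t) 2 μ := by
    intro t ht
    have h1 : MemLp (mS • Z t) 2 μ := (hZL2 t ht).const_smul mS
    exact (hWL2 t ht).sub h1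
  have hg2var : ∀ t, 1 ≤ t → ∫ ω, (g2 t ω) ^ 2 ∂μ ≤ 2 * CW + 2 * mS ^ 2 := by
    intro t ht
    have hint : Integrable (fun ω => (g2 t ω) ^ 2) μ := (hg2L2 t ht).integrable_sq
    have hint2 : Integrable (fun ω => 2 * (W t ω) ^ 2 + 2 * mS ^ 2) μ :=
      ((hWL2 t ht).integrable_sq.const_mul 2).add (integrable_const _)
    calc ∫ ω, (g2 t ω) ^ 2 ∂μ ≤ ∫ ω, (2 * (W t ω) ^ 2 + 2 * mS ^ 2) ∂μ := by
          refine integral_mono_ae hint hint2 ?_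
          filter_upwards with ω
          have h1 : (Z t ω) ^ 2 ≤ 1 := by
            rcases hZ01 t ω with h | h <;> rw [h] <;> norm_num
          simp only [hg2, Pi.sub_apply, Pi.smul_apply, smul_eq_mul]
          nlinarith [sq_nonneg (W t ω + mS * Z t ω), sq_nonneg (mS * Z t ω), sq_nonneg mS,
            sq_nonneg (mS * Z t ω - mS)]
      _ ≤ 2 * CW + 2 * mS ^ 2 := by
          rw [integral_add ((hWL2 t ht).integrable_sq.const_mul 2) (integrable_const _),
            integral_const_mul, integral_const]
          have := hWvar t ht
          simp only [Measure.real, measure_univ, ENNReal.toReal_one, one_smul]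
          linarith
  have hg2cond : ∀ t, 1 ≤ t → μ[g2 t | 𝓕 (t-1)] =ᵐ[μ] 0 := by
    intro t ht
    have h := condExp_sub (m := 𝓕 (t-1)) (hWint t ht) ((hZint t ht).smul mS)
    have hsmul := condExp_smul (m := 𝓕 (t-1)) (μ := μ) mS (Z t)
    refine h.trans ?_
    filter_upwards [hWcond t ht, hsmul] with ω h1 h2
    simp only [Pi.sub_apply, Pi.zero_apply, h1, h2, Pi.smul_apply, smul_eq_mul]
    ring
  -- part 1: bound on the denominator event
  have hAe : ∀ᵐ ω ∂μ, ∀ t, 1 ≤ t → δ ^ 2 ≤ (μ[Z t | 𝓕 (t-1)]) ω := by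
    rw [ae_all_iff]
    intro t
    by_cases h : 1 ≤ t
    · filter_upwards [hZlb t h] with ω hω _
      exact hω
    · filter_upwards with ω h'
      exact absurd h' h
  have bound1 : ∀ T : ℕ, 1 ≤ T →
      (μ {ω | (∑ t ∈ Finset.Icc 1 T, Z t ω) / T < δ ^ 2 / 2}).toReal
        ≤ 4 / (δ ^ 2 / 2) ^ 2 / T := by
    intro T hT
    have hT0 : (0:ℝ) < T := by exact_mod_cast hT
    have hsub : {ω | (∑ t ∈ Finset.Icc 1 T, Z t ω) / T < δ ^ 2 / 2}
        ≤ᵐ[μ] {ω | δ ^ 2 / 2 ≤ |∑ t ∈ Finset.Icc 1 T, g1 t ω| / T} := by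
      filter_upwards [hAe] with ω hω hmem0
      have hmem : (∑ t ∈ Finset.Icc 1 T, Z t ω) / T < δ ^ 2 / 2 := hmem0
      show δ ^ 2 / 2 ≤ |∑ t ∈ Finset.Icc 1 T, g1 t ω| / T
      have hAsum : (T : ℝ) * δ ^ 2 ≤ ∑ t ∈ Finset.Icc 1 T, (μ[Z t | 𝓕 (t-1)]) ω := by
        calc (T : ℝ) * δ ^ 2 = ∑ _t ∈ Finset.Icc 1 T, δ ^ 2 := by
              rw [Finset.sum_const, Nat.card_Icc]
              simp [mul_comm]
          _ ≤ _ := Finset.sum_le_sum fun t ht => hω t (Finset.mem_Icc.mp ht).1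
      have hsum : ∑ t ∈ Finset.Icc 1 T, g1 t ω
          = (∑ t ∈ Finset.Icc 1 T, Z t ω) - ∑ t ∈ Finset.Icc 1 T, (μ[Z t | 𝓕 (t-1)]) ω := by
        simp only [hg1, Pi.sub_apply]
        exact Finset.sum_sub_distrib _ _
      rw [div_lt_iff₀ hT0] at hmem
      rw [le_div_iff₀ hT0]
      have : ∑ t ∈ Finset.Icc 1 T, g1 t ω ≤ -(δ ^ 2 / 2 * T) := by
        rw [hsum]; nlinarith
      have habs := neg_abs_le (∑ t ∈ Finset.Icc 1 T, g1 t ω)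
      linarith
    calc (μ {ω | (∑ t ∈ Finset.Icc 1 T, Z t ω) / T < δ ^ 2 / 2}).toReal
        ≤ (μ {ω | δ ^ 2 / 2 ≤ |∑ t ∈ Finset.Icc 1 T, g1 t ω| / T}).toReal :=
          ENNReal.toReal_mono (measure_ne_top μ _) (measure_mono_ae hsub)
      _ ≤ 4 / (δ ^ 2 / 2) ^ 2 / T :=
          cheb_bound 𝓕 g1 4 hg1adapt hg1L2 hg1var hg1cond (by positivity) hT
  constructor
  · refine squeeze_zero' (Eventually.of_forall fun T => ENNReal.toReal_nonneg) ?_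
      (tendsto_const_div_atTop_nhds_zero_nat (4 / (δ ^ 2 / 2) ^ 2))
    filter_upwards [eventually_ge_atTop 1] with T hT
    exact bound1 T hT
  · intro ε hε
    set C2 : ℝ := 2 * CW + 2 * mS ^ 2 with hC2
    have bound2 : ∀ T : ℕ, 1 ≤ T →
        (μ {ω | ε ≤ |(∑ t ∈ Finset.Icc 1 T, W t ω) /
          (∑ t ∈ Finset.Icc 1 T, Z t ω) - mS|}).toReal
        ≤ 4 / (δ ^ 2 / 2) ^ 2 / T + C2 / (ε * (δ ^ 2 / 2)) ^ 2 / T := by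
      intro T hT
      have hT0 : (0:ℝ) < T := by exact_mod_cast hT
      have hsub : {ω | ε ≤ |(∑ t ∈ Finset.Icc 1 T, W t ω) /
            (∑ t ∈ Finset.Icc 1 T, Z t ω) - mS|}
          ⊆ {ω | (∑ t ∈ Finset.Icc 1 T, Z t ω) / T < δ ^ 2 / 2}
            ∪ {ω | ε * (δ ^ 2 / 2) ≤ |∑ t ∈ Finset.Icc 1 T, g2 t ω| / T} := by
        intro ω hω
        simp only [Set.mem_setOf_eq, Set.mem_union] at hω ⊢
        by_cases hc : (∑ t ∈ Finset.Icc 1 T, Z t ω) / T < δ ^ 2 / 2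
        · exact Or.inl hc
        · right
          push_neg at hc
          set NZ := ∑ t ∈ Finset.Icc 1 T, Z t ω with hNZ
          set NW := ∑ t ∈ Finset.Icc 1 T, W t ω with hNW
          have hNZ_lb : δ ^ 2 / 2 * T ≤ NZ := by
            rw [le_div_iff₀ hT0] at hc
            linarith
          have hNZ0 : 0 < NZ := lt_of_lt_of_le (by positivity) hNZ_lb
          have hsum2 : ∑ t ∈ Finset.Icc 1 T, g2 t ω = NW - mS * NZ := by
            simp only [hg2, Pi.sub_apply, Pi.smul_apply, smul_eq_mul]
            rw [Finset.sum_sub_distrib, ← Finset.mul_sum]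

          have hratio : NW / NZ - mS = (NW - mS * NZ) / NZ := by
            field_simp
          rw [hratio, abs_div, abs_of_pos hNZ0] at hω
          rw [le_div_iff₀ hNZ0] at hω
          rw [le_div_iff₀ hT0, hsum2]
          calc ε * (δ ^ 2 / 2) * T = ε * (δ ^ 2 / 2 * T) := by ring
            _ ≤ ε * NZ := by
                exact mul_le_mul_of_nonneg_left hNZ_lb hε.le
            _ ≤ |NW - mS * NZ| := hω
      have hcheb2 : (μ {ω | ε * (δ ^ 2 / 2) ≤ |∑ t ∈ Finset.Icc 1 T, g2 t ω| / T}).toReal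
          ≤ C2 / (ε * (δ ^ 2 / 2)) ^ 2 / T :=
        cheb_bound 𝓕 g2 C2 hg2adapt hg2L2 hg2var hg2cond (by positivity) hT
      have hm1 := measure_mono (μ := μ) hsub
      have hm2 := measure_union_le (μ := μ)
        {ω | (∑ t ∈ Finset.Icc 1 T, Z t ω) / T < δ ^ 2 / 2}
        {ω | ε * (δ ^ 2 / 2) ≤ |∑ t ∈ Finset.Icc 1 T, g2 t ω| / T}
      have htr : (μ {ω | ε ≤ |(∑ t ∈ Finset.Icc 1 T, W t ω) /
            (∑ t ∈ Finset.Icc 1 T, Z t ω) - mS|}).toReal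
          ≤ (μ {ω | (∑ t ∈ Finset.Icc 1 T, Z t ω) / T < δ ^ 2 / 2}).toReal
            + (μ {ω | ε * (δ ^ 2 / 2) ≤ |∑ t ∈ Finset.Icc 1 T, g2 t ω| / T}).toReal := by
        have h := (hm1.trans hm2)
        have := ENNReal.toReal_mono
          (ENNReal.add_ne_top.mpr ⟨measure_ne_top μ _, measure_ne_top μ _⟩) h
        rwa [ENNReal.toReal_add (measure_ne_top μ _) (measure_ne_top μ _)] at this
      exact htr.trans (add_le_add (bound1 T hT) hcheb2)
    have hlim : Tendsto (fun T : ℕ => 4 / (δ ^ 2 / 2) ^ 2 / T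
        + C2 / (ε * (δ ^ 2 / 2)) ^ 2 / T) atTop (nhds 0) := by
      have := (tendsto_const_div_atTop_nhds_zero_nat (4 / (δ ^ 2 / 2) ^ 2)).add
        (tendsto_const_div_atTop_nhds_zero_nat (C2 / (ε * (δ ^ 2 / 2)) ^ 2))
      simpa using this
    refine squeeze_zero' (Eventually.of_forall fun T => ENNReal.toReal_nonneg) ?_ hlim
    filter_upwards [eventually_ge_atTop 1] with T hT
    exact bound2 T hT


end helpers


/-- Consistency of the IPW ratio estimator in adaptive designs: under the same setup
as the martingale step, if moreover `𝔼[𝟙(X_t∈S)D_t | 𝓕_{t-1}] ≥ δ²`, then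
`N_T/T ≥ δ²/2` with probability approaching one and the ratio estimator converges in
probability to `𝔼[Y(1) | X ∈ S]`. -/
theorem stmt14 {Ω α : Type*} {m0 : MeasurableSpace Ω} [MeasurableSpace α]
    (μ : Measure Ω) [IsProbabilityMeasure μ]
    (𝓕 : Filtration ℕ m0)
    (X : ℕ → Ω → α) (S : Set α) (hS : MeasurableSet S)
    (D : ℕ → Ω → ℝ) (Y0 Y1 Y : ℕ → Ω → ℝ) (e : ℕ → Ω → ℝ)
    (δ mS : ℝ) (hδ : δ ∈ Set.Ioo (0 : ℝ) (1 / 2))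
    (hY : ∀ t ω, Y t ω = D t ω * Y1 t ω + (1 - D t ω) * Y0 t ω)
    (hD01 : ∀ t ω, D t ω = 0 ∨ D t ω = 1)
    (hXmeas : ∀ t, Measurable (X t)) (hDmeas : ∀ t, Measurable (D t))
    (hY0meas : ∀ t, Measurable (Y0 t)) (hY1meas : ∀ t, Measurable (Y1 t))
    (hadaptX : ∀ t, Measurable[𝓕 t] (X t))
    (hadaptD : ∀ t, Measurable[𝓕 t] (D t))
    (hadaptY : ∀ t, Measurable[𝓕 t] (Y t))
    (hindep : iIndepFun
      (fun t ω => (Y0 t ω, Y1 t ω, X t ω)) μ)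
    (hident : ∀ t, IdentDistrib (fun ω => (Y0 t ω, Y1 t ω, X t ω))
      (fun ω => (Y0 0 ω, Y1 0 ω, X 0 ω)) μ μ)
    (hL2 : Integrable (fun ω => (Y1 0 ω) ^ 2) μ)
    (hemeas : ∀ t, 1 ≤ t → StronglyMeasurable[𝓕 (t - 1)] (e t))
    (hebound : ∀ t ω, e t ω ∈ Set.Icc δ (1 - δ))
    (hassign : ∀ t, 1 ≤ t → ∀ f : ℝ → ℝ, Measurable f →
      Integrable (fun ω => f (Y1 t ω)) μ →
      μ[fun ω => S.indicator (fun _ => (1 : ℝ)) (X t ω) * D t ω * f (Y1 t ω) | 𝓕 (t - 1)]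
        =ᵐ[μ] fun ω => e t ω *
          (μ[fun ω' => S.indicator (fun _ => (1 : ℝ)) (X t ω') * f (Y1 t ω') | 𝓕 (t - 1)]) ω)
    (hout : ∀ t, 1 ≤ t → ∀ f : ℝ → ℝ, Measurable f →
      Integrable (fun ω => f (Y1 t ω)) μ →
      μ[fun ω => S.indicator (fun _ => (1 : ℝ)) (X t ω) * f (Y1 t ω) | 𝓕 (t - 1)]
        =ᵐ[μ] fun ω =>
          ((∫ ω', S.indicator (fun _ => (1 : ℝ)) (X 0 ω') * f (Y1 0 ω') ∂μ) /
            (μ {ω' | X 0 ω' ∈ S}).toReal) *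
          (μ[fun ω' => S.indicator (fun _ => (1 : ℝ)) (X t ω') | 𝓕 (t - 1)]) ω)
    (hSprob : ∀ t, 1 ≤ t → ∀ᵐ ω ∂μ,
      δ ≤ (μ[fun ω' => S.indicator (fun _ => (1 : ℝ)) (X t ω') | 𝓕 (t - 1)]) ω)
    (hmS : mS = (∫ ω, S.indicator (fun _ => (1 : ℝ)) (X 0 ω) * Y1 0 ω ∂μ) /
      (μ {ω | X 0 ω ∈ S}).toReal)
    (hdenom : ∀ t, 1 ≤ t → ∀ᵐ ω ∂μ, δ ^ 2 ≤
      (μ[fun ω' => S.indicator (fun _ => (1 : ℝ)) (X t ω') * D t ω' | 𝓕 (t - 1)]) ω) :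
    Tendsto (fun T : ℕ =>
      (μ {ω | (∑ t ∈ Finset.Icc 1 T,
        S.indicator (fun _ => (1 : ℝ)) (X t ω) * D t ω) / T < δ ^ 2 / 2}).toReal)
      atTop (nhds 0) ∧
    ∀ ε : ℝ, 0 < ε →
      Tendsto (fun T : ℕ =>
        (μ {ω | ε ≤ |(∑ t ∈ Finset.Icc 1 T,
            S.indicator (fun _ => (1 : ℝ)) (X t ω) * D t ω * Y t ω) /
          (∑ t ∈ Finset.Icc 1 T,
            S.indicator (fun _ => (1 : ℝ)) (X t ω) * D t ω) - mS|}).toReal)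
        atTop (nhds 0) := by
  obtain ⟨hδ0, hδh⟩ := hδ
  have hIndMeas : Measurable (S.indicator (fun _ => (1:ℝ))) := measurable_const.indicator hS
  have hind01 : ∀ (t : ℕ) ω, S.indicator (fun _ => (1:ℝ)) (X t ω) = 0 ∨
      S.indicator (fun _ => (1:ℝ)) (X t ω) = 1 := by
    intro t ω
    by_cases h : X t ω ∈ S <;> simp [Set.indicator_apply, h]
  have hid : ∀ t : ℕ, IdentDistrib (Y1 t) (Y1 0) μ μ := fun t =>
    (hident t).comp (measurable_fst.comp measurable_snd)
  have hY10L2 : MemLp (Y1 0) 2 μ :=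
    (memLp_two_iff_integrable_sq (hY1meas 0).aestronglyMeasurable).2 hL2
  have hY1L2 : ∀ t, MemLp (Y1 t) 2 μ := fun t => (hid t).symm.memLp_snd hY10L2
  have hY1sq : ∀ t : ℕ, ∫ ω, (Y1 t ω) ^ 2 ∂μ = ∫ ω, (Y1 0 ω) ^ 2 ∂μ := fun t =>
    ((hid t).comp (measurable_id.pow_const 2)).integral_eq
  have hWeq : ∀ (t : ℕ) ω, S.indicator (fun _ => (1:ℝ)) (X t ω) * D t ω * Y t ω
      = S.indicator (fun _ => (1:ℝ)) (X t ω) * D t ω * Y1 t ω := by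
    intro t ω
    rcases hD01 t ω with h | h <;> rw [hY t ω, h] <;> ring
  have hZ01 : ∀ (t : ℕ) ω, S.indicator (fun _ => (1:ℝ)) (X t ω) * D t ω = 0 ∨
      S.indicator (fun _ => (1:ℝ)) (X t ω) * D t ω = 1 := by
    intro t ω
    rcases hind01 t ω with h1 | h1 <;> rcases hD01 t ω with h2 | h2 <;> rw [h1, h2] <;> norm_num
  have hZadapt : ∀ t, 1 ≤ t → StronglyMeasurable[𝓕 t]
      (fun ω => S.indicator (fun _ => (1:ℝ)) (X t ω) * D t ω) := fun t _ =>
    ((hIndMeas.comp (hadaptX t)).mul (hadaptD t)).stronglyMeasurable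
  have hWadapt : ∀ t, 1 ≤ t → StronglyMeasurable[𝓕 t]
      (fun ω => S.indicator (fun _ => (1:ℝ)) (X t ω) * D t ω * Y t ω) := fun t _ =>
    (((hIndMeas.comp (hadaptX t)).mul (hadaptD t)).mul (hadaptY t)).stronglyMeasurable
  have hWL2 : ∀ t, 1 ≤ t → MemLp
      (fun ω => S.indicator (fun _ => (1:ℝ)) (X t ω) * D t ω * Y t ω) 2 μ := by
    intro t ht
    refine MemLp.mono' (hY1L2 t).norm
      (((hIndMeas.comp (hXmeas t)).mul (hDmeas t)).mul
        ((hadaptY t).mono (𝓕.le t) le_rfl)).aestronglyMeasurable ?_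
    filter_upwards with ω
    rw [hWeq t ω, Real.norm_eq_abs, Real.norm_eq_abs]
    rcases hind01 t ω with h1 | h1 <;> rcases hD01 t ω with h2 | h2 <;>
      simp [h1, h2, abs_nonneg]
  have hWvar : ∀ t, 1 ≤ t →
      ∫ ω, (S.indicator (fun _ => (1:ℝ)) (X t ω) * D t ω * Y t ω) ^ 2 ∂μ
        ≤ ∫ ω, (Y1 0 ω) ^ 2 ∂μ := by
    intro t ht
    rw [← hY1sq t]
    refine integral_mono_ae ((hWL2 t ht).integrable_sq) ((hY1L2 t).integrable_sq) ?_
    filter_upwards with ω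
    rw [hWeq t ω]
    rcases hind01 t ω with h1 | h1 <;> rcases hD01 t ω with h2 | h2 <;>
      simp [h1, h2, sq_nonneg]
  have hWcond : ∀ t, 1 ≤ t →
      μ[(fun ω => S.indicator (fun _ => (1:ℝ)) (X t ω) * D t ω * Y t ω) | 𝓕 (t-1)]
        =ᵐ[μ] fun ω => mS *
          (μ[(fun ω => S.indicator (fun _ => (1:ℝ)) (X t ω) * D t ω) | 𝓕 (t-1)]) ω := by
    intro t ht
    have hWfun : (fun ω => S.indicator (fun _ => (1:ℝ)) (X t ω) * D t ω * Y t ω)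
        = fun ω => S.indicator (fun _ => (1:ℝ)) (X t ω) * D t ω * Y1 t ω :=
      funext fun ω => hWeq t ω
    have hY1int : Integrable (fun ω => (fun x : ℝ => x) (Y1 t ω)) μ :=
      (hY1L2 t).integrable one_le_two
    have h1 := hassign t ht (fun x => x) measurable_id hY1int
    have h2 := hout t ht (fun x => x) measurable_id hY1int
    have h3 := hassign t ht (fun _ => (1:ℝ)) measurable_const (integrable_const 1)
    simp only [mul_one] at h3
    simp only [] at h1 h2
    rw [← hmS] at h2
    rw [hWfun]
    refine h1.trans ?_
    filter_upwards [h2, h3] with ω h2ω h3ω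
    rw [h2ω, h3ω]
    ring
  exact ratio_consistency (μ := μ) 𝓕
    (fun t ω => S.indicator (fun _ => (1:ℝ)) (X t ω) * D t ω)
    (fun t ω => S.indicator (fun _ => (1:ℝ)) (X t ω) * D t ω * Y t ω)
    mS δ (∫ ω, (Y1 0 ω) ^ 2 ∂μ) hδ0 hZ01 hZadapt hWadapt hWL2 hWvar hWcond hdenom
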